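/- Let P and Q be orthogonal projections in generic position on a complex Hilbert space H. Then the selfadjoint operator P+Q-1 is injective, and there exists a symmetry V on H (a selfadjoint unitary) such that V commutes with P+Q-1, V(P+Q-1) is a positive operator, VPV = Q, VQV = P, and V(P-Q) = -(P-Q)V. -/

import Mathlib

/-! `A = P + Q - 1` intertwines the two projections, `A P = Q A` and `A Q = P A`, and generic
position makes it injective, hence (being selfadjoint) of dense range. The symmetry is the phase
`V` of the polar decomposition `A = V |A|`. As `A²` commutes with `P` and `Q`, so does
`|A| = √(A²)`, and every identity for `V` (`V A = A V = |A|`, `V² = 1`, `V* = V`, `V P = Q V`)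
follows by checking it after right multiplication by the dense-range operator `|A|` or `A`. -/

open ContinuousLinearMap

variable {H : Type*} [NormedAddCommGroup H] [InnerProductSpace ℂ H] [CompleteSpace H]

/-- An orthogonal projection: a selfadjoint idempotent bounded operator. -/
def IsOrthogonalProjection (P : H →L[ℂ] H) : Prop :=
  IsSelfAdjoint P ∧ P * P = P

/-- A symmetry: a selfadjoint unitary operator. -/
def IsSymmetry (V : H →L[ℂ] H) : Prop :=
  IsSelfAdjoint V ∧ V * V = 1

/-- Two orthogonal projections are in generic position if the four canonical
intersections of their ranges and kernels are trivial. -/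
def GenericPosition (P Q : H →L[ℂ] H) : Prop :=
  LinearMap.range (P : H →ₗ[ℂ] H) ⊓ LinearMap.range (Q : H →ₗ[ℂ] H) = ⊥ ∧
  LinearMap.range (P : H →ₗ[ℂ] H) ⊓ LinearMap.ker (Q : H →ₗ[ℂ] H) = ⊥ ∧
  LinearMap.ker (P : H →ₗ[ℂ] H) ⊓ LinearMap.range (Q : H →ₗ[ℂ] H) = ⊥ ∧
  LinearMap.ker (P : H →ₗ[ℂ] H) ⊓ LinearMap.ker (Q : H →ₗ[ℂ] H) = ⊥

theorem add_sub_one_mul_eq_mul_add_sub_one {R : Type*} [Ring R] {p q : R}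
    (hp : IsIdempotentElem p) (hq : IsIdempotentElem q) :
    (p + q - 1) * p = q * (p + q - 1) := by
  simp only [add_mul, sub_mul, mul_add, mul_sub, one_mul, mul_one, hp.eq, hq.eq]
  abel

theorem ContinuousLinearMap.injective_add_sub_one {R M : Type*} [Ring R] [TopologicalSpace M]
    [AddCommGroup M] [IsTopologicalAddGroup M] [Module R M] {P Q : M →L[R] M}
    (hP : IsIdempotentElem P) (hQ : IsIdempotentElem Q)
    (hPQ : LinearMap.range (P : M →ₗ[R] M) ⊓ LinearMap.ker (Q : M →ₗ[R] M) = ⊥)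
    (hQP : LinearMap.ker (P : M →ₗ[R] M) ⊓ LinearMap.range (Q : M →ₗ[R] M) = ⊥) :
    Function.Injective ⇑(P + Q - 1) := by
  refine (injective_iff_map_eq_zero _).mpr fun x hx => ?_
  have hx : P x + Q x = x := by simpa [sub_eq_zero] using hx
  have hPx_ker : Q (P x) = 0 := by
    have hQQ : Q (Q x) = Q x := DFunLike.congr_fun hQ.eq x
    simpa [hQQ] using congrArg Q hx
  have hQx_ker : P (Q x) = 0 := by
    have hPP : P (P x) = P x := DFunLike.congr_fun hP.eq x
    simpa [hPP] using congrArg P hx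
  have hPx : P x = 0 := (Submodule.mem_bot R).mp <| hPQ ▸ ⟨⟨x, rfl⟩, hPx_ker⟩
  have hQx : Q x = 0 := (Submodule.mem_bot R).mp <| hQP ▸ ⟨hQx_ker, ⟨x, rfl⟩⟩
  rw [← hx, hPx, hQx, add_zero]

theorem ContinuousLinearMap.eq_of_mul_eq_mul_of_denseRange {R M : Type*} [Semiring R]
    [TopologicalSpace M] [T2Space M] [AddCommMonoid M] [Module R M] {S S' T : M →L[R] M}
    (hT : DenseRange T) (h : S * T = S' * T) : S = S' :=
  ContinuousLinearMap.ext <| congrFun <|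
    hT.equalizer S.continuous S'.continuous (congrArg DFunLike.coe h)

theorem IsSelfAdjoint.denseRange_of_injective {𝕜 E : Type*} [RCLike 𝕜] [NormedAddCommGroup E]
    [InnerProductSpace 𝕜 E] [CompleteSpace E] {T : E →L[𝕜] E} (hT : IsSelfAdjoint T)
    (hinj : Function.Injective T) : DenseRange T := by
  have h : (LinearMap.range (T : E →ₗ[𝕜] E))ᗮ = ⊥ := by
    rw [ContinuousLinearMap.orthogonal_range, ← star_eq_adjoint, hT.star_eq]
    exact LinearMap.ker_eq_bot.mpr hinj
  have := Submodule.dense_iff_topologicalClosure_eq_top.mpr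
    (Submodule.topologicalClosure_eq_top_iff.mpr h)
  simpa [DenseRange, LinearMap.coe_range] using this

theorem norm_cfcAbs_apply (A : H →L[ℂ] H) (x : H) : ‖CFC.abs A x‖ = ‖A x‖ := by
  have h : adjoint (CFC.abs A) ∘L CFC.abs A = adjoint A ∘L A := by
    rw [← star_eq_adjoint, ← star_eq_adjoint, (CFC.abs_nonneg A).isSelfAdjoint.star_eq]
    exact CFC.abs_mul_abs A
  rw [apply_norm_eq_sqrt_inner_adjoint_left, h, ← apply_norm_eq_sqrt_inner_adjoint_left]

/-- The phase `V` of the polar decomposition `A = V |A|`, extended by continuity from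
`V (|A| x) = A x`; a junk value unless `|A|` has dense range. -/
noncomputable def polarPhase (A : H →L[ℂ] H) : H →L[ℂ] H :=
  (A : H →ₗ[ℂ] H).extendOfNorm ((CFC.abs A : H →L[ℂ] H) : H →ₗ[ℂ] H)

section PolarPhase

variable {A : H →L[ℂ] H}

theorem denseRange_cfcAbs (hinj : Function.Injective A) :
    DenseRange ⇑(CFC.abs A) := by
  refine (CFC.abs_nonneg A).isSelfAdjoint.denseRange_of_injective <|
    (injective_iff_map_eq_zero _).mpr fun x hx => (injective_iff_map_eq_zero A).mp hinj x ?_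
  rw [← norm_eq_zero, ← norm_cfcAbs_apply, hx, norm_zero]

theorem polarPhase_mul_cfcAbs (hinj : Function.Injective A) : polarPhase A * CFC.abs A = A := by
  ext x
  exact LinearMap.extendOfNorm_eq (denseRange_cfcAbs hinj)
    ⟨1, fun y => by rw [one_mul, coe_coe, coe_coe, norm_cfcAbs_apply]⟩ x

theorem cfcAbs_mul_cfcAbs (hA : IsSelfAdjoint A) : CFC.abs A * CFC.abs A = A * A := by
  rw [CFC.abs_mul_abs, hA.star_eq]

theorem commute_cfcAbs_of_mul_eq_mul (hA : IsSelfAdjoint A) {B C : H →L[ℂ] H}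
    (hBC : A * B = C * A) (hCB : A * C = B * A) : Commute (CFC.abs A) B := by
  have h : Commute (star A * A) B := by
    rw [hA.star_eq, Commute, SemiconjBy, mul_assoc, hBC, ← mul_assoc, hCB, mul_assoc]
  exact h.cfcₙ_nnreal NNReal.sqrt

theorem polarPhase_mul_self (hA : IsSelfAdjoint A) (hinj : Function.Injective A) :
    polarPhase A * A = CFC.abs A := by
  refine eq_of_mul_eq_mul_of_denseRange (denseRange_cfcAbs hinj) ?_
  rw [mul_assoc, ← (CFC.commute_abs_self A).eq, ← mul_assoc, polarPhase_mul_cfcAbs hinj,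
    cfcAbs_mul_cfcAbs hA]

theorem mul_polarPhase (hA : IsSelfAdjoint A) (hinj : Function.Injective A) :
    A * polarPhase A = CFC.abs A := by
  refine eq_of_mul_eq_mul_of_denseRange (denseRange_cfcAbs hinj) ?_
  rw [mul_assoc, polarPhase_mul_cfcAbs hinj, cfcAbs_mul_cfcAbs hA]

theorem polarPhase_mul_polarPhase (hA : IsSelfAdjoint A) (hinj : Function.Injective A) :
    polarPhase A * polarPhase A = 1 := by
  refine eq_of_mul_eq_mul_of_denseRange (denseRange_cfcAbs hinj) ?_
  rw [mul_assoc, polarPhase_mul_cfcAbs hinj, polarPhase_mul_self hA hinj, one_mul]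

theorem isSelfAdjoint_polarPhase (hA : IsSelfAdjoint A) (hinj : Function.Injective A) :
    IsSelfAdjoint (polarPhase A) := by
  refine eq_of_mul_eq_mul_of_denseRange (hA.denseRange_of_injective hinj) ?_
  rw [polarPhase_mul_self hA hinj, ← hA.star_eq, ← star_mul, hA.star_eq, mul_polarPhase hA hinj,
    (CFC.abs_nonneg A).isSelfAdjoint.star_eq]

theorem polarPhase_mul_eq_mul_polarPhase (hA : IsSelfAdjoint A) (hinj : Function.Injective A)
    {B C : H →L[ℂ] H} (hBC : A * B = C * A) (hCB : A * C = B * A) :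
    polarPhase A * B = C * polarPhase A := by
  refine eq_of_mul_eq_mul_of_denseRange (denseRange_cfcAbs hinj) ?_
  rw [mul_assoc, ← (commute_cfcAbs_of_mul_eq_mul hA hBC hCB).eq, ← mul_assoc,
    polarPhase_mul_cfcAbs hinj, hBC, mul_assoc, polarPhase_mul_cfcAbs hinj]

end PolarPhase

theorem davis_symmetry_exists (P Q : H →L[ℂ] H)
    (hP : IsOrthogonalProjection P) (hQ : IsOrthogonalProjection Q)
    (hgen : GenericPosition P Q) :
    Function.Injective ⇑(P + Q - 1) ∧
    ∃ V : H →L[ℂ] H, IsSymmetry V ∧ Commute V (P + Q - 1) ∧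
      (V * (P + Q - 1)).IsPositive ∧
      V * P * V = Q ∧ V * Q * V = P ∧
      V * (P - Q) = -((P - Q) * V) := by
  obtain ⟨hP, hPP⟩ := hP
  obtain ⟨hQ, hQQ⟩ := hQ
  obtain ⟨-, hPQ, hQP, -⟩ := hgen
  have hA : IsSelfAdjoint (P + Q - 1) := (hP.add hQ).sub (.one _)
  have hinj : Function.Injective ⇑(P + Q - 1) := injective_add_sub_one hPP hQQ hPQ hQP
  have hAP : (P + Q - 1) * P = Q * (P + Q - 1) :=
    add_sub_one_mul_eq_mul_add_sub_one hPP hQQ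
  have hAQ : (P + Q - 1) * Q = P * (P + Q - 1) := by
    simpa only [add_comm Q P] using add_sub_one_mul_eq_mul_add_sub_one hQQ hPP
  have hVP := polarPhase_mul_eq_mul_polarPhase hA hinj hAP hAQ
  have hVQ := polarPhase_mul_eq_mul_polarPhase hA hinj hAQ hAP
  have hVV := polarPhase_mul_polarPhase hA hinj
  refine ⟨hinj, polarPhase (P + Q - 1), ⟨isSelfAdjoint_polarPhase hA hinj, hVV⟩,
    ?_, ?_, ?_, ?_, ?_⟩
  · exact (polarPhase_mul_self hA hinj).trans (mul_polarPhase hA hinj).symm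
  · rw [polarPhase_mul_self hA hinj, ← nonneg_iff_isPositive]
    exact CFC.abs_nonneg _
  · rw [hVP, mul_assoc, hVV, mul_one]
  · rw [hVQ, mul_assoc, hVV, mul_one]
  · rw [mul_sub, sub_mul, hVP, hVQ, neg_sub]
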